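/- arXiv:1803.11398 — 2 statements merged into one kernel-verified Lean document; each statement's English description precedes it below -/
import Mathlib

section
/- Let i ∈ I be a sink or a source of the quiver Q°(C,Ω). Then for all α, β ∈ ℤ^I one has ⟨α,β⟩_{C,D,Ω} = ⟨s_i(α), s_i(β)⟩_{C,D,s_i(Ω)}. -/
set_option maxHeartbeats 1000000
set_option synthInstance.maxHeartbeats 400000

namespace GLS

/-- A symmetrizable (generalized) Cartan matrix together with a symmetrizer. -/
structure CartanPair (n : ℕ) where
  c : Fin n → Fin n → ℤ
  d : Fin n → ℤ
  hdiag : ∀ i, c i i = 2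
  hoff : ∀ i j, i ≠ j → c i j ≤ 0
  hdpos : ∀ i, 0 < d i
  hsym : ∀ i j, d i * c i j = d j * c j i

variable {n : ℕ}

/-- `g_{ij} = gcd(c_{ij}, c_{ji})` (number of arrows between `i ≠ j`). -/
def gij (A : CartanPair n) (i j : Fin n) : ℕ := if i = j then 0 else (A.c i j).gcd (A.c j i)

/-- the exponent `-c_{ji}/g_{ij}` appearing in the defining relations. -/
def expo (A : CartanPair n) (i j : Fin n) : ℕ := ((-(A.c j i)) / (gij A i j : ℤ)).toNat

/-- An orientation of the Cartan matrix. -/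
def IsOrientation (A : CartanPair n) (Ω : Finset (Fin n × Fin n)) : Prop :=
  (∀ i j : Fin n, ((i,j) ∈ Ω ∨ (j,i) ∈ Ω) ↔ A.c i j < 0) ∧
  (∀ i j : Fin n, (i,j) ∈ Ω → (j,i) ∉ Ω) ∧
  (∀ (f : ℕ → Fin n) (k : ℕ), 0 < k → (∀ m < k, (f m, f (m+1)) ∈ Ω) → f 0 ≠ f k)

/-- `k` is a sink of `Q°(C,Ω)` (no arrows start at `k`; arrows go `j → i` for `(i,j) ∈ Ω`). -/
def IsSink (Ω : Finset (Fin n × Fin n)) (k : Fin n) : Prop := ∀ i, (i, k) ∉ Ω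

/-- `k` is a source of `Q°(C,Ω)`. -/
def IsSource (Ω : Finset (Fin n × Fin n)) (k : Fin n) : Prop := ∀ j, (k, j) ∉ Ω

/-- `s_k(Ω)`: reverse all pairs incident with `k`. -/
def flipAt (k : Fin n) (Ω : Finset (Fin n × Fin n)) : Finset (Fin n × Fin n) :=
  (Ω.filter (fun p => p.1 ≠ k ∧ p.2 ≠ k)) ∪
    ((Ω.filter (fun p => p.1 = k ∨ p.2 = k)).image (fun p => (p.2, p.1)))

/-- the symmetric bilinear form `(α_i, α_j)_{C,D} = c_i c_{ij}`. -/
def symBil (A : CartanPair n) (x y : Fin n → ℤ) : ℤ :=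
  ∑ i, ∑ j, (A.d i * A.c i j) * x i * y j

/-- `C` is of Dynkin type iff `(−,−)_{C,D}` is positive definite. -/
def IsDynkin (A : CartanPair n) : Prop := ∀ x : Fin n → ℤ, x ≠ 0 → 0 < symBil A x x

/-- the nonsymmetric bilinear form `⟨−,−⟩_{C,D,Ω}`. -/
def nsymBil (A : CartanPair n) (Ω : Finset (Fin n × Fin n)) (x y : Fin n → ℤ) : ℤ :=
  ∑ i, ∑ j, (if i = j then A.d i else if (j,i) ∈ Ω then A.d i * A.c i j else 0) * x i * y j

/-- the simple reflection `s_i` as a plain function on `ℤ^I`. -/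
def reflFun (A : CartanPair n) (i : Fin n) (x : Fin n → ℤ) : Fin n → ℤ :=
  fun k => x k - (if k = i then ∑ j, A.c i j * x j else 0)

section Algebras

variable (K : Type) [Field K]

/-- generators for the algebras `H` and `Π`: idempotents `vtx i`, loops `lp i`,
and arrows `arr i j k = α_{ij}^{(k)} : j → i`. -/
inductive Gen (n : ℕ) : Type
  | vtx : Fin n → Gen n
  | lp : Fin n → Gen n
  | arr : Fin n → Fin n → ℕ → Gen n

/-- the free algebra on the generators. -/
abbrev FA (n : ℕ) := FreeAlgebra K (Gen n)

/-- the canonical image of a generator. -/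
def gen (x : Gen n) : FA K n := FreeAlgebra.ι K x

/-- Defining relations of `H = H_K(C,D,Ω)` (together with the path-algebra relations
for the idempotents `e_i`). -/
inductive HRel (A : CartanPair n) (Ω : Finset (Fin n × Fin n)) : FA K n → FA K n → Prop
  | idem (i j : Fin n) :
      HRel A Ω (gen K (.vtx i) * gen K (.vtx j)) (if i = j then gen K (.vtx i) else 0)
  | sum_one : HRel A Ω (∑ i, gen K (.vtx i)) 1
  | lp_comp (i : Fin n) :
      HRel A Ω (gen K (.vtx i) * gen K (.lp i) * gen K (.vtx i)) (gen K (.lp i))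
  | arr_comp (i j : Fin n) (k : ℕ) :
      HRel A Ω (gen K (.vtx i) * gen K (.arr i j k) * gen K (.vtx j)) (gen K (.arr i j k))
  | arr_invalid (i j : Fin n) (k : ℕ) (h : ¬((i,j) ∈ Ω ∧ k < gij A i j)) :
      HRel A Ω (gen K (.arr i j k)) 0
  | lp_nil (i : Fin n) : HRel A Ω (gen K (.lp i) ^ (A.d i).toNat) 0
  | comm (i j : Fin n) (k : ℕ) (h : (i,j) ∈ Ω) (hk : k < gij A i j) :
      HRel A Ω (gen K (.lp i) ^ expo A i j * gen K (.arr i j k))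
               (gen K (.arr i j k) * gen K (.lp j) ^ expo A j i)

/-- pin the `Semiring` structure of quotients of the free algebra to the one coming
from the `Ring` structure (avoids non-syntactic instance mismatches). -/
noncomputable instance (priority := 5000) ringQuotSemiring
    (r : FA K n → FA K n → Prop) : Semiring (RingQuot r) :=
  Ring.toSemiring

/-- the algebra `H = H_K(C,D,Ω)`. -/
abbrev HAlg (A : CartanPair n) (Ω : Finset (Fin n × Fin n)) := RingQuot (HRel K A Ω)

/-- the idempotent `e_i ∈ H`. -/
def eV (A : CartanPair n) (Ω : Finset (Fin n × Fin n)) (i : Fin n) : HAlg K A Ω :=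
  RingQuot.mkAlgHom K (HRel K A Ω) (gen K (.vtx i))

/-- the loop `ε_i ∈ H`. -/
def eL (A : CartanPair n) (Ω : Finset (Fin n × Fin n)) (i : Fin n) : HAlg K A Ω :=
  RingQuot.mkAlgHom K (HRel K A Ω) (gen K (.lp i))

/-- the arrow `α_{ij}^{(k)} ∈ H`. -/
def eA (A : CartanPair n) (Ω : Finset (Fin n × Fin n)) (i j : Fin n) (k : ℕ) : HAlg K A Ω :=
  RingQuot.mkAlgHom K (HRel K A Ω) (gen K (.arr i j k))

/-- `H_i = K[ε]/(ε^m)`. -/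
abbrev Ai (m : ℕ) : Type := Polynomial K ⧸ Ideal.span {(Polynomial.X : Polynomial K) ^ m}

/-- the image of `X` in `K[ε]/(ε^m)`. -/
noncomputable def xAi (m : ℕ) : Ai K m := Ideal.Quotient.mk _ Polynomial.X

/-- `M` is locally free with rank vector `r`: there is a `K`-linear trivialization under
which `e_i` acts as the projection to the `i`-th block and `ε_i` acts as multiplication
by `X` on the `i`-th block `(K[ε]/(ε^{c_i}))^{r_i}`. -/
def IsLFRk (A : CartanPair n) (Ω : Finset (Fin n × Fin n)) (M : Type)
    [AddCommGroup M] [Module K M] [Module (HAlg K A Ω) M] (r : Fin n → ℕ) : Prop :=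
  ∃ ψ : M ≃ₗ[K] ((i : Fin n) → Fin (r i) → Ai K (A.d i).toNat),
    (∀ (i : Fin n) (m : M) (j : Fin n),
        ψ (eV K A Ω i • m) j = if j = i then ψ m j else 0) ∧
    (∀ (i : Fin n) (m : M) (j : Fin n),
        ψ (eL K A Ω i • m) j = if j = i then (fun t => xAi K (A.d j).toNat * ψ m j t) else 0)

/-- `M` is locally free. -/
def IsLF (A : CartanPair n) (Ω : Finset (Fin n × Fin n)) (M : Type)
    [AddCommGroup M] [Module K M] [Module (HAlg K A Ω) M] : Prop :=
  ∃ r, IsLFRk K A Ω M r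

end Algebras

end GLS

namespace GLS

open Finset in
private lemma sum_split {n : ℕ} (i : Fin n) (f : Fin n → Fin n → ℤ) :
    ∑ p, ∑ q, f p q = f i i + (∑ q ∈ univ.erase i, f i q)
      + (∑ p ∈ univ.erase i, f p i)
      + ∑ p ∈ univ.erase i, ∑ q ∈ univ.erase i, f p q := by
  rw [← Finset.add_sum_erase _ (fun p => ∑ q, f p q) (Finset.mem_univ i),
      ← Finset.add_sum_erase _ (f i) (Finset.mem_univ i)]
  have h : ∀ p, ∑ q, f p q = f p i + ∑ q ∈ univ.erase i, f p q := fun p =>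
    (Finset.add_sum_erase _ (f p) (Finset.mem_univ i)).symm
  rw [Finset.sum_congr rfl (fun p _ => h p), Finset.sum_add_distrib]
  ring

/-- if `i` is a sink or a source of `Q°(C,Ω)`, then
`⟨α,β⟩_{C,D,Ω} = ⟨s_i(α), s_i(β)⟩_{C,D,s_i(Ω)}` for all `α, β ∈ ℤ^I`. -/
theorem statement_0 {n : ℕ} (A : CartanPair n) (Ω : Finset (Fin n × Fin n))
    (hΩ : IsOrientation A Ω) (i : Fin n) (hi : IsSink Ω i ∨ IsSource Ω i) :
    ∀ α β : Fin n → ℤ,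
      nsymBil A Ω α β = nsymBil A (flipAt i Ω) (reflFun A i α) (reflFun A i β) := by
  intro x y
  classical
  obtain ⟨hΩ1, hΩ2, -⟩ := hΩ
  have hc0 : ∀ p q : Fin n, p ≠ q → (p,q) ∉ Ω → (q,p) ∉ Ω → A.c p q = 0 := by
    intro p q hpq h1 h2
    have h3 : ¬ A.c p q < 0 := fun h => by
      rcases (hΩ1 p q).mpr h with h | h
      · exact h1 h
      · exact h2 h
    exact le_antisymm (A.hoff p q hpq) (not_lt.mp h3)
  have hmem : ∀ p q : Fin n, ((p,q) ∈ flipAt i Ω) ↔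
      ((p,q) ∈ Ω ∧ p ≠ i ∧ q ≠ i) ∨ ((q,p) ∈ Ω ∧ (q = i ∨ p = i)) := by
    intro p q
    simp only [flipAt, Finset.mem_union, Finset.mem_filter, Finset.mem_image, Finset.mem_univ,
      Prod.exists, Prod.mk.injEq]
    constructor
    · rintro (⟨h, h1, h2⟩ | ⟨a, b, ⟨h, h3⟩, rfl, rfl⟩)
      · exact Or.inl ⟨h, h1, h2⟩
      · exact Or.inr ⟨h, h3⟩
    · rintro (⟨h, h1, h2⟩ | ⟨h, h3⟩)
      · exact Or.inl ⟨h, h1, h2⟩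
      · exact Or.inr ⟨q, p, ⟨h, h3⟩, rfl, rfl⟩
  set Sx := ∑ j, A.c i j * x j with hSx
  set Sy := ∑ j, A.c i j * y j with hSy
  set x' := reflFun A i x with hx'def
  set y' := reflFun A i y with hy'def
  have hx'i : x' i = x i - Sx := by simp [hx'def, reflFun, hSx]
  have hy'i : y' i = y i - Sy := by simp [hy'def, reflFun, hSy]
  have hx' : ∀ p, p ≠ i → x' p = x p := by intro p hp; simp [hx'def, reflFun, hp]
  have hy' : ∀ q, q ≠ i → y' q = y q := by intro q hq; simp [hy'def, reflFun, hq]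
  have eSx : ∑ p ∈ Finset.univ.erase i, A.c i p * x p = Sx - 2 * x i := by
    rw [hSx, ← Finset.add_sum_erase Finset.univ (fun p => A.c i p * x p) (Finset.mem_univ i)]
    simp only [A.hdiag]; ring
  have eSy : ∑ q ∈ Finset.univ.erase i, A.c i q * y q = Sy - 2 * y i := by
    rw [hSy, ← Finset.add_sum_erase Finset.univ (fun q => A.c i q * y q) (Finset.mem_univ i)]
    simp only [A.hdiag]; ring
  unfold nsymBil
  rw [sum_split i (fun p q =>
      (if p = q then A.d p else if (q,p) ∈ Ω then A.d p * A.c p q else 0) * x p * y q),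
    sum_split i (fun p q =>
      (if p = q then A.d p else if (q,p) ∈ flipAt i Ω then A.d p * A.c p q else 0)
        * x' p * y' q)]
  have hblock :
      (∑ p ∈ Finset.univ.erase i, ∑ q ∈ Finset.univ.erase i,
        (if p = q then A.d p else if (q,p) ∈ flipAt i Ω then A.d p * A.c p q else 0)
          * x' p * y' q)
      = ∑ p ∈ Finset.univ.erase i, ∑ q ∈ Finset.univ.erase i,
        (if p = q then A.d p else if (q,p) ∈ Ω then A.d p * A.c p q else 0) * x p * y q := by
    refine Finset.sum_congr rfl (fun p hp => Finset.sum_congr rfl (fun q hq => ?_))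
    have hp' : p ≠ i := (Finset.mem_erase.mp hp).1
    have hq' : q ≠ i := (Finset.mem_erase.mp hq).1
    rw [hx' p hp', hy' q hq']
    congr 2
    by_cases hpq : p = q
    · simp [hpq]
    · have : ((q,p) ∈ flipAt i Ω) ↔ ((q,p) ∈ Ω) := by
        rw [hmem]; simp [hp', hq']
      simp only [hpq, if_false, this]
  rw [hblock]
  -- reduce to the terms involving i
  have hWii : (if i = i then A.d i else if ((i:Fin n),(i:Fin n)) ∈ Ω then A.d i * A.c i i else 0)
      = A.d i := by simp
  have hWii' : (if i = i then A.d i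
      else if ((i:Fin n),(i:Fin n)) ∈ flipAt i Ω then A.d i * A.c i i else 0) = A.d i := by simp
  rcases hi with hsink | hsource
  · -- sink case
    have a2 : (∑ q ∈ Finset.univ.erase i,
        (if i = q then A.d i else if (q,i) ∈ flipAt i Ω then A.d i * A.c i q else 0)
          * x' i * y' q)
        = (A.d i * x' i) * (Sy - 2 * y i) := by
      rw [← eSy, Finset.mul_sum]
      refine Finset.sum_congr rfl (fun q hq => ?_)
      have hq' : q ≠ i := (Finset.mem_erase.mp hq).1
      have hiq : ¬ (i = q) := fun h => hq' h.symm
      have hmem' : ((q,i) ∈ flipAt i Ω) ↔ ((i,q) ∈ Ω) := by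
        rw [hmem]; simp [hq']
      rw [hy' q hq']
      by_cases h : (i,q) ∈ Ω
      · simp only [hiq, if_false, hmem', h, if_true]; ring
      · have hc : A.c i q = 0 := hc0 i q (fun he => hq' he.symm) h (hsink q)
        simp only [hiq, if_false, hmem', h, if_false, hc]; ring
    have a3 : (∑ p ∈ Finset.univ.erase i,
        (if p = i then A.d p else if (i,p) ∈ flipAt i Ω then A.d p * A.c p i else 0)
          * x' p * y' i) = 0 := by
      refine Finset.sum_eq_zero (fun p hp => ?_)
      have hp' : p ≠ i := (Finset.mem_erase.mp hp).1
      have hmem' : ¬ ((i,p) ∈ flipAt i Ω) := by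
        rw [hmem]
        rintro (⟨-, hii, -⟩ | ⟨h, -⟩)
        · exact hii rfl
        · exact hsink p h
      simp [hp', hmem']
    have b2 : (∑ q ∈ Finset.univ.erase i,
        (if i = q then A.d i else if (q,i) ∈ Ω then A.d i * A.c i q else 0) * x i * y q)
        = 0 := by
      refine Finset.sum_eq_zero (fun q hq => ?_)
      have hq' : q ≠ i := (Finset.mem_erase.mp hq).1
      have hiq : ¬ (i = q) := fun h => hq' h.symm
      simp [hiq, hsink q]
    have b3 : (∑ p ∈ Finset.univ.erase i,
        (if p = i then A.d p else if (i,p) ∈ Ω then A.d p * A.c p i else 0) * x p * y i)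
        = (A.d i * (Sx - 2 * x i)) * y i := by
      rw [← eSx, Finset.mul_sum, Finset.sum_mul]
      refine Finset.sum_congr rfl (fun p hp => ?_)
      have hp' : p ≠ i := (Finset.mem_erase.mp hp).1
      by_cases h : (i,p) ∈ Ω
      · have hs := A.hsym p i
        simp only [hp', if_false, h, if_true]
        calc A.d p * A.c p i * x p * y i = (A.d p * A.c p i) * (x p * y i) := by ring
          _ = (A.d i * A.c i p) * (x p * y i) := by rw [hs]
          _ = A.d i * (A.c i p * x p) * y i := by ring
      · have hc : A.c i p = 0 := hc0 i p (fun he => hp' he.symm) h (hsink p)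
        simp [hp', h, hc]
    rw [a2, a3, b2, b3, hWii, hWii', hx'i, hy'i]
    ring
  · -- source case
    have a2 : (∑ q ∈ Finset.univ.erase i,
        (if i = q then A.d i else if (q,i) ∈ flipAt i Ω then A.d i * A.c i q else 0)
          * x' i * y' q) = 0 := by
      refine Finset.sum_eq_zero (fun q hq => ?_)
      have hq' : q ≠ i := (Finset.mem_erase.mp hq).1
      have hiq : ¬ (i = q) := fun h => hq' h.symm
      have hmem' : ¬ ((q,i) ∈ flipAt i Ω) := by
        rw [hmem]
        rintro (⟨-, -, hii⟩ | ⟨h, -⟩)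
        · exact hii rfl
        · exact hsource q h
      simp [hiq, hmem']
    have a3 : (∑ p ∈ Finset.univ.erase i,
        (if p = i then A.d p else if (i,p) ∈ flipAt i Ω then A.d p * A.c p i else 0)
          * x' p * y' i)
        = (A.d i * (Sx - 2 * x i)) * y' i := by
      rw [← eSx, Finset.mul_sum, Finset.sum_mul]
      refine Finset.sum_congr rfl (fun p hp => ?_)
      have hp' : p ≠ i := (Finset.mem_erase.mp hp).1
      have hmem' : ((i,p) ∈ flipAt i Ω) ↔ ((p,i) ∈ Ω) := by
        rw [hmem]; simp [hp']
      rw [hx' p hp']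
      by_cases h : (p,i) ∈ Ω
      · have hs := A.hsym p i
        simp only [hp', if_false, hmem', h, if_true]
        calc A.d p * A.c p i * x p * y' i = (A.d p * A.c p i) * (x p * y' i) := by ring
          _ = (A.d i * A.c i p) * (x p * y' i) := by rw [hs]
          _ = A.d i * (A.c i p * x p) * y' i := by ring
      · have hc : A.c i p = 0 := hc0 i p (fun he => hp' he.symm) (hsource p) h
        simp [hp', hmem', h, hc]
    have b2 : (∑ q ∈ Finset.univ.erase i,
        (if i = q then A.d i else if (q,i) ∈ Ω then A.d i * A.c i q else 0) * x i * y q)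
        = (A.d i * x i) * (Sy - 2 * y i) := by
      rw [← eSy, Finset.mul_sum]
      refine Finset.sum_congr rfl (fun q hq => ?_)
      have hq' : q ≠ i := (Finset.mem_erase.mp hq).1
      have hiq : ¬ (i = q) := fun h => hq' h.symm
      by_cases h : (q,i) ∈ Ω
      · simp only [hiq, if_false, h, if_true]; ring
      · have hc : A.c i q = 0 := hc0 i q (fun he => hq' he.symm) (hsource q) h
        simp only [hiq, if_false, h, if_false, hc]; ring
    have b3 : (∑ p ∈ Finset.univ.erase i,
        (if p = i then A.d p else if (i,p) ∈ Ω then A.d p * A.c p i else 0) * x p * y i)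
        = 0 := by
      refine Finset.sum_eq_zero (fun p hp => ?_)
      have hp' : p ≠ i := (Finset.mem_erase.mp hp).1
      simp [hp', hsource p]
    rw [a2, a3, b2, b3, hWii, hWii', hx'i, hy'i]
    ring

end GLS
end

section
/- Let B = ⊕_{(i,j)∈Ω} _iH_j, viewed as an S-S-bimodule. Then there is a short exact sequence of H-H-bimodules 0 → H ⊗_S B ⊗_S H →^δ H ⊗_S H →^mult H → 0, where δ(h ⊗ b ⊗ h') = hb ⊗ h' − h ⊗ bh' and mult is the multiplication map. -/
set_option maxHeartbeats 1000000
set_option synthInstance.maxHeartbeats 400000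

namespace GLS

noncomputable section


open scoped TensorProduct

variable {n : ℕ} (K : Type) [Field K] (A : CartanPair n) (Ω : Finset (Fin n × Fin n))

/-- the subalgebra `S = ∏_i H_i ⊆ H`, generated by the idempotents and the loops. -/
def Ssub : Subalgebra K (HAlg K A Ω) :=
  Algebra.adjoin K (Set.range (eV K A Ω) ∪ Set.range (eL K A Ω))

/-- the `S`-`S`-bimodule `B = ⊕_{(i,j) ∈ Ω} {}_iH_j ⊆ H`, spanned by the elements
`ε_i^a α_{ij}^{(k)} ε_j^b`. -/
def Bsub : Submodule K (HAlg K A Ω) :=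
  Submodule.span K {x | ∃ (i j : Fin n) (k a b : ℕ), (i,j) ∈ Ω ∧ k < gij A i j ∧
    x = eL K A Ω i ^ a * eA K A Ω i j k * eL K A Ω j ^ b}

/-- the balancing submodule defining `H ⊗_S H` as a quotient of `H ⊗_K H`. -/
def bal1 : Submodule K (HAlg K A Ω ⊗[K] HAlg K A Ω) :=
  Submodule.span K {x | ∃ (h h' s : HAlg K A Ω), s ∈ Ssub K A Ω ∧
    x = (h * s) ⊗ₜ[K] h' - h ⊗ₜ[K] (s * h')}

/-- `H ⊗_S H`. -/
def THH : Type := @HasQuotient.Quotient _ _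
  (Submodule.hasQuotient (M := HAlg K A Ω ⊗[K] HAlg K A Ω) (R := K)) (bal1 K A Ω)

noncomputable instance : AddCommGroup (THH K A Ω) := by unfold THH; infer_instance
noncomputable instance : Module K (THH K A Ω) := by unfold THH; infer_instance

/-- class of a pure tensor in `H ⊗_S H`. -/
noncomputable def mk1 (h h' : HAlg K A Ω) : THH K A Ω :=
  Submodule.Quotient.mk (h ⊗ₜ[K] h')

noncomputable instance acg3 :
    AddCommGroup (HAlg K A Ω ⊗[K] (↥(Bsub K A Ω) ⊗[K] HAlg K A Ω)) :=
  TensorProduct.addCommGroup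

noncomputable instance mod3 :
    Module K (HAlg K A Ω ⊗[K] (↥(Bsub K A Ω) ⊗[K] HAlg K A Ω)) :=
  TensorProduct.instModule

/-- the balancing submodule defining `H ⊗_S B ⊗_S H` as a quotient of `H ⊗_K B ⊗_K H`. -/
def bal2 : Submodule K (HAlg K A Ω ⊗[K] (↥(Bsub K A Ω) ⊗[K] HAlg K A Ω)) :=
  Submodule.span K
    ({x | ∃ (h h' s : HAlg K A Ω) (b b' : ↥(Bsub K A Ω)), s ∈ Ssub K A Ω ∧
        (b' : HAlg K A Ω) = s * (b : HAlg K A Ω) ∧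
        x = (h * s) ⊗ₜ[K] ((b : ↥(Bsub K A Ω)) ⊗ₜ[K] h') - h ⊗ₜ[K] (b' ⊗ₜ[K] h')} ∪
     {x | ∃ (h h' s : HAlg K A Ω) (b b' : ↥(Bsub K A Ω)), s ∈ Ssub K A Ω ∧
        (b' : HAlg K A Ω) = (b : HAlg K A Ω) * s ∧
        x = h ⊗ₜ[K] (b' ⊗ₜ[K] h') - h ⊗ₜ[K] ((b : ↥(Bsub K A Ω)) ⊗ₜ[K] (s * h'))})

/-- `H ⊗_S B ⊗_S H`. -/
def THBH : Type := (HAlg K A Ω ⊗[K] (↥(Bsub K A Ω) ⊗[K] HAlg K A Ω)) ⧸ bal2 K A Ω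

noncomputable instance : AddCommGroup (THBH K A Ω) := by unfold THBH; infer_instance
noncomputable instance : Module K (THBH K A Ω) := by unfold THBH; infer_instance

/-- class of a pure tensor in `H ⊗_S B ⊗_S H`. -/
noncomputable def mk2 (h : HAlg K A Ω) (b : ↥(Bsub K A Ω)) (h' : HAlg K A Ω) : THBH K A Ω :=
  Submodule.Quotient.mk (h ⊗ₜ[K] (b ⊗ₜ[K] h'))

/-!
Exactness at `H ⊗_S H`: since `H` is generated by `S ∪ B`, induction over this generation shows
`h ⊗ gh' - hg ⊗ h' ∈ im δ` for every `g ∈ H` (for `g ∈ S` it is `0`, for `g ∈ B` it is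
`-δ(h ⊗ g ⊗ h')`); so every `x` is congruent to `μ(x) ⊗ 1` modulo `im δ`, and `ker μ ⊆ im δ`.

Injectivity of `δ`: it has the left inverse `h ⊗ h' ↦ D(h) h'`, where `D : H → H ⊗_S B ⊗_S H` is a
derivation with `D(S) = 0` and `D(b) = 1 ⊗ b ⊗ 1` for `b ∈ B`. Such a `D` is the second component
of an algebra map from `H` to the trivial square-zero extension `H ⊕ (H ⊗_S B ⊗_S H)` sending
`e_i ↦ e_i`, `ε_i ↦ ε_i` and `α ↦ α + 1 ⊗ α ⊗ 1`. The relations of `H` that involve arrows,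
`e_i α e_j = α` and `ε_i^a α = α ε_j^b`, hold for these images because elements of `S` can be moved
across the tensor signs into `B`.
-/

namespace BalancedTensor

open TensorProduct LinearMap

variable {R Λ : Type*} [CommRing R] [Ring Λ] [Algebra R Λ] (S : Subalgebra R Λ) (B : Submodule R Λ)

-- `Λ ⊗_S Λ` and `Λ ⊗_S B ⊗_S Λ`, presented exactly as `THH` and `THBH` are for `Λ = H`, so that
-- `THH K A Ω` and `THBH K A Ω` are definitionally `Tensor₂ (Ssub K A Ω)` and
-- `Tensor₃ (Ssub K A Ω) (Bsub K A Ω)`.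
def balancing₂ : Submodule R (Λ ⊗[R] Λ) :=
  Submodule.span R {x | ∃ (h h' s : Λ), s ∈ S ∧ x = (h * s) ⊗ₜ[R] h' - h ⊗ₜ[R] (s * h')}

abbrev Tensor₂ : Type _ := (Λ ⊗[R] Λ) ⧸ balancing₂ S

def balancing₃ : Submodule R (Λ ⊗[R] (B ⊗[R] Λ)) :=
  Submodule.span R
    ({x | ∃ (h h' s : Λ) (b b' : B), s ∈ S ∧ (b' : Λ) = s * b ∧
        x = (h * s) ⊗ₜ[R] (b ⊗ₜ[R] h') - h ⊗ₜ[R] (b' ⊗ₜ[R] h')} ∪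
     {x | ∃ (h h' s : Λ) (b b' : B), s ∈ S ∧ (b' : Λ) = b * s ∧
        x = h ⊗ₜ[R] (b' ⊗ₜ[R] h') - h ⊗ₜ[R] (b ⊗ₜ[R] (s * h'))})

abbrev Tensor₃ : Type _ := (Λ ⊗[R] (B ⊗[R] Λ)) ⧸ balancing₃ S B

def mk₂ : Λ →ₗ[R] Λ →ₗ[R] Tensor₂ S :=
  (TensorProduct.mk R Λ Λ).compr₂ (balancing₂ S).mkQ

def mk₃ : Λ →ₗ[R] B →ₗ[R] Λ →ₗ[R] Tensor₃ S B :=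
  lcurry (RingHom.id R) B Λ _ ∘ₗ (TensorProduct.mk R Λ (B ⊗[R] Λ)).compr₂ (balancing₃ S B).mkQ

variable {S B}

lemma mk₂_mul_of_mem {s : Λ} (hs : s ∈ S) (h h' : Λ) : mk₂ S (h * s) h' = mk₂ S h (s * h') :=
  (Submodule.Quotient.eq _).mpr (Submodule.subset_span ⟨h, h', s, hs, rfl⟩)

lemma mk₃_mul_left_of_mem {s : Λ} (hs : s ∈ S) (h h' : Λ) {b b' : B} (hb : (b' : Λ) = s * b) :
    mk₃ S B (h * s) b h' = mk₃ S B h b' h' :=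
  (Submodule.Quotient.eq _).mpr (Submodule.subset_span (Or.inl ⟨h, h', s, b, b', hs, hb, rfl⟩))

lemma mk₃_mul_right_of_mem {s : Λ} (hs : s ∈ S) (h h' : Λ) {b b' : B} (hb : (b' : Λ) = b * s) :
    mk₃ S B h b' h' = mk₃ S B h b (s * h') :=
  (Submodule.Quotient.eq _).mpr (Submodule.subset_span (Or.inr ⟨h, h', s, b, b', hs, hb, rfl⟩))

lemma mk₃_eq_mk₃_one_left {s : Λ} (hs : s ∈ S) {b b' : B} (hb : (b' : Λ) = s * b) (h' : Λ) :
    mk₃ S B s b h' = mk₃ S B 1 b' h' := by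
  rw [← mk₃_mul_left_of_mem hs 1 h' hb, one_mul]

lemma mk₃_eq_mk₃_one_right {t : Λ} (ht : t ∈ S) {b b' : B} (hb : (b' : Λ) = b * t) (h : Λ) :
    mk₃ S B h b t = mk₃ S B h b' 1 := by
  rw [mk₃_mul_right_of_mem ht h 1 hb, mul_one]

lemma Tensor₂.linearMap_ext {M : Type*} [AddCommGroup M] [Module R M] {f g : Tensor₂ S →ₗ[R] M}
    (hfg : ∀ h h', f (mk₂ S h h') = g (mk₂ S h h')) : f = g :=
  Submodule.linearMap_qext _ (ext' hfg)

lemma Tensor₃.linearMap_ext {M : Type*} [AddCommGroup M] [Module R M]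
    {f g : Tensor₃ S B →ₗ[R] M} (hfg : ∀ h b h', f (mk₃ S B h b h') = g (mk₃ S B h b h')) :
    f = g :=
  Submodule.linearMap_qext _ (ext_threefold' hfg)

variable (S) in
def lmul₂ (a : Λ) : Module.End R (Tensor₂ S) :=
  (balancing₂ S).mapQ (balancing₂ S) ((mulLeft R a).rTensor Λ) <| Submodule.span_le.mpr <| by
    rintro _ ⟨h, h', s, hs, rfl⟩
    exact Submodule.subset_span ⟨a * h, h', s, hs, by simp [mul_assoc]⟩

variable (S) in
def rmul₂ (a : Λ) : Module.End R (Tensor₂ S) :=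
  (balancing₂ S).mapQ (balancing₂ S) ((mulRight R a).lTensor Λ) <| Submodule.span_le.mpr <| by
    rintro _ ⟨h, h', s, hs, rfl⟩
    exact Submodule.subset_span ⟨h, h' * a, s, hs, by simp [mul_assoc]⟩

@[simp] lemma lmul₂_mk₂ (a h h' : Λ) : lmul₂ S a (mk₂ S h h') = mk₂ S (a * h) h' := rfl
@[simp] lemma rmul₂_mk₂ (a h h' : Λ) : rmul₂ S a (mk₂ S h h') = mk₂ S h (h' * a) := rfl

variable (S B) in
def lmul₃ : Λ →ₐ[R] Module.End R (Tensor₃ S B) where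
  toFun a := (balancing₃ S B).mapQ (balancing₃ S B) ((mulLeft R a).rTensor _) <|
    Submodule.span_le.mpr <| by
      rintro _ (⟨h, h', s, b, b', hs, hb, rfl⟩ | ⟨h, h', s, b, b', hs, hb, rfl⟩)
      · exact Submodule.subset_span (Or.inl ⟨a * h, h', s, b, b', hs, hb, by simp [mul_assoc]⟩)
      · exact Submodule.subset_span (Or.inr ⟨a * h, h', s, b, b', hs, hb, by simp⟩)
  map_one' := Tensor₃.linearMap_ext fun h b h' =>
    show mk₃ S B (1 * h) b h' = mk₃ S B h b h' by rw [one_mul]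
  map_mul' a a' := Tensor₃.linearMap_ext fun h b h' =>
    show mk₃ S B (a * a' * h) b h' = mk₃ S B (a * (a' * h)) b h' by rw [mul_assoc]
  map_zero' := Tensor₃.linearMap_ext fun h b h' =>
    show mk₃ S B (0 * h) b h' = 0 by simp
  map_add' a a' := Tensor₃.linearMap_ext fun h b h' =>
    show mk₃ S B ((a + a') * h) b h' = mk₃ S B (a * h) b h' + mk₃ S B (a' * h) b h' by
      simp [add_mul]
  commutes' r := Tensor₃.linearMap_ext fun h b h' =>
    show mk₃ S B (algebraMap R Λ r * h) b h' = r • mk₃ S B h b h' by simp [← Algebra.smul_def]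

variable (S B) in
def rmul₃ : Λᵐᵒᵖ →ₐ[R] Module.End R (Tensor₃ S B) where
  toFun a := (balancing₃ S B).mapQ (balancing₃ S B) (((mulRight R a.unop).lTensor B).lTensor Λ) <|
    Submodule.span_le.mpr <| by
      rintro _ (⟨h, h', s, b, b', hs, hb, rfl⟩ | ⟨h, h', s, b, b', hs, hb, rfl⟩)
      · exact Submodule.subset_span (Or.inl ⟨h, h' * a.unop, s, b, b', hs, hb, by simp⟩)
      · exact Submodule.subset_span (Or.inr ⟨h, h' * a.unop, s, b, b', hs, hb, by simp [mul_assoc]⟩)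
  map_one' := Tensor₃.linearMap_ext fun h b h' =>
    show mk₃ S B h b (h' * 1) = mk₃ S B h b h' by rw [mul_one]
  map_mul' a a' := Tensor₃.linearMap_ext fun h b h' =>
    show mk₃ S B h b (h' * (a'.unop * a.unop)) = mk₃ S B h b (h' * a'.unop * a.unop) by
      rw [mul_assoc]
  map_zero' := Tensor₃.linearMap_ext fun h b h' =>
    show mk₃ S B h b (h' * 0) = 0 by simp
  map_add' a a' := Tensor₃.linearMap_ext fun h b h' =>
    show mk₃ S B h b (h' * (a.unop + a'.unop)) =
        mk₃ S B h b (h' * a.unop) + mk₃ S B h b (h' * a'.unop) by simp [mul_add]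
  commutes' r := Tensor₃.linearMap_ext fun h b h' =>
    show mk₃ S B h b (h' * algebraMap R Λ r) = r • mk₃ S B h b h' by
      simp [← Algebra.commutes, ← Algebra.smul_def]

instance : Module Λ (Tensor₃ S B) := Module.compHom _ (lmul₃ S B).toRingHom

instance : Module Λᵐᵒᵖ (Tensor₃ S B) := Module.compHom _ (rmul₃ S B).toRingHom

@[simp] lemma lmul₃_mk₃ (a h h' : Λ) (b : B) :
    lmul₃ S B a (mk₃ S B h b h') = mk₃ S B (a * h) b h' :=
  rfl

@[simp] lemma rmul₃_mk₃ (a h h' : Λ) (b : B) :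
    rmul₃ S B (MulOpposite.op a) (mk₃ S B h b h') = mk₃ S B h b (h' * a) :=
  rfl

@[simp] lemma smul_mk₃ (a h h' : Λ) (b : B) : a • mk₃ S B h b h' = mk₃ S B (a * h) b h' := rfl

@[simp] lemma op_smul_mk₃ (a h h' : Λ) (b : B) :
    MulOpposite.op a • mk₃ S B h b h' = mk₃ S B h b (h' * a) := rfl

instance : SMulCommClass Λ Λᵐᵒᵖ (Tensor₃ S B) where
  smul_comm a a' x := by
    change lmul₃ S B a (rmul₃ S B a' x) = rmul₃ S B a' (lmul₃ S B a x)
    rw [← Module.End.mul_apply, ← Module.End.mul_apply]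
    congr 1
    exact Tensor₃.linearMap_ext fun _ _ _ => rfl

instance : IsScalarTower R Λ (Tensor₃ S B) where
  smul_assoc c a x := by
    change lmul₃ S B (c • a) x = c • lmul₃ S B a x
    rw [map_smul, LinearMap.smul_apply]

instance : IsScalarTower R Λᵐᵒᵖ (Tensor₃ S B) where
  smul_assoc c a x := by
    change rmul₃ S B (c • a) x = c • rmul₃ S B a x
    rw [map_smul, LinearMap.smul_apply]

variable (S) in
def mulMap : Tensor₂ S →ₗ[R] Λ :=
  (balancing₂ S).liftQ (mul' R Λ) <| Submodule.span_le.mpr <| by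
    rintro _ ⟨h, h', s, -, rfl⟩
    simp [mul_assoc]

@[simp] lemma mulMap_mk₂ (h h' : Λ) : mulMap S (mk₂ S h h') = h * h' := rfl

lemma mulMap_surjective : Function.Surjective (mulMap S) :=
  fun h => ⟨mk₂ S h 1, mul_one h⟩

lemma mulMap_lmul₂ (a : Λ) (y : Tensor₂ S) : mulMap S (lmul₂ S a y) = a * mulMap S y :=
  LinearMap.congr_fun (f := mulMap S ∘ₗ lmul₂ S a) (g := mulLeft R a ∘ₗ mulMap S)
    (Tensor₂.linearMap_ext fun h h' => by simp [mul_assoc]) y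

lemma mulMap_rmul₂ (a : Λ) (y : Tensor₂ S) : mulMap S (rmul₂ S a y) = mulMap S y * a :=
  LinearMap.congr_fun (f := mulMap S ∘ₗ rmul₂ S a) (g := mulRight R a ∘ₗ mulMap S)
    (Tensor₂.linearMap_ext fun h h' => by simp [mul_assoc]) y

variable (B) in
def tensorDelta : Λ ⊗[R] (B ⊗[R] Λ) →ₗ[R] Λ ⊗[R] Λ :=
  (mul' R Λ).rTensor Λ ∘ₗ (TensorProduct.assoc R Λ Λ Λ).symm.toLinearMap ∘ₗ
      (B.subtype.rTensor Λ).lTensor Λ -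
    (mul' R Λ ∘ₗ B.subtype.rTensor Λ).lTensor Λ

@[simp] lemma tensorDelta_tmul (h h' : Λ) (b : B) :
    tensorDelta B (h ⊗ₜ (b ⊗ₜ h')) = (h * b) ⊗ₜ h' - h ⊗ₜ (b * h') := by
  simp [tensorDelta]

variable (S B) in
def delta : Tensor₃ S B →ₗ[R] Tensor₂ S :=
  (balancing₃ S B).liftQ ((balancing₂ S).mkQ ∘ₗ tensorDelta B) <| Submodule.span_le.mpr <| by
    rintro _ (⟨h, h', s, b, b', hs, hb, rfl⟩ | ⟨h, h', s, b, b', hs, hb, rfl⟩) <;>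
      simp only [SetLike.mem_coe, mem_ker, map_sub, coe_comp, Function.comp_apply,
        tensorDelta_tmul, Submodule.mkQ_apply, hb]
    · change mk₂ S (h * s * b) h' - mk₂ S (h * s) (b * h') -
        (mk₂ S (h * (s * b)) h' - mk₂ S h (s * b * h')) = 0
      rw [mk₂_mul_of_mem hs h (b * h')]
      simp [mul_assoc]
    · change mk₂ S (h * (b * s)) h' - mk₂ S h (b * s * h') -
        (mk₂ S (h * b) (s * h') - mk₂ S h (b * (s * h'))) = 0
      rw [← mk₂_mul_of_mem hs (h * b) h']
      simp [mul_assoc]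

@[simp] lemma delta_mk₃ (h h' : Λ) (b : B) :
    delta S B (mk₃ S B h b h') = mk₂ S (h * b) h' - mk₂ S h (b * h') := by
  change (balancing₂ S).mkQ (tensorDelta B (h ⊗ₜ (b ⊗ₜ h'))) = _
  rw [tensorDelta_tmul, map_sub]
  rfl

lemma delta_smul (a : Λ) (x : Tensor₃ S B) : delta S B (a • x) = lmul₂ S a (delta S B x) :=
  LinearMap.congr_fun (f := delta S B ∘ₗ lmul₃ S B a) (g := lmul₂ S a ∘ₗ delta S B)
    (Tensor₃.linearMap_ext fun h b h' => by simp [mul_assoc]) x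

lemma delta_op_smul (a : Λ) (x : Tensor₃ S B) :
    delta S B (MulOpposite.op a • x) = rmul₂ S a (delta S B x) :=
  LinearMap.congr_fun (f := delta S B ∘ₗ rmul₃ S B (MulOpposite.op a)) (g := rmul₂ S a ∘ₗ delta S B)
    (Tensor₃.linearMap_ext fun h b h' => by simp [mul_assoc]) x

lemma mulMap_comp_delta : mulMap S ∘ₗ delta S B = 0 :=
  Tensor₃.linearMap_ext fun h b h' => by simp [mul_assoc]

lemma mk₂_mul_sub_mem_range_delta {g : Λ} (hg : g ∈ Algebra.adjoin R ((S : Set Λ) ∪ B))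
    (h h' : Λ) : mk₂ S h (g * h') - mk₂ S (h * g) h' ∈ range (delta S B) := by
  induction hg using Algebra.adjoin_induction generalizing h h' with
  | mem g hg =>
    rcases hg with hS | hB
    · simp [mk₂_mul_of_mem hS]
    · exact ⟨-mk₃ S B h ⟨g, hB⟩ h', by simp⟩
  | algebraMap r => simp [Algebra.algebraMap_eq_smul_one]
  | add g g' _ _ hg hg' =>
    convert add_mem (hg h h') (hg' h h') using 1
    simp only [add_mul, mul_add, map_add, LinearMap.add_apply]
    abel
  | mul g g' _ _ hg hg' =>
    convert add_mem (hg h (g' * h')) (hg' (h * g) h') using 1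
    simp only [mul_assoc]
    abel

lemma ker_mulMap_le_range_delta (hgen : Algebra.adjoin R ((S : Set Λ) ∪ B) = ⊤) :
    ker (mulMap S) ≤ range (delta S B) := by
  have hrange (y : Tensor₂ S) : y - mk₂ S (mulMap S y) 1 ∈ range (delta S B) := by
    induction y using Submodule.Quotient.induction_on with | H t => ?_
    induction t using TensorProduct.induction_on with
    | zero => simp
    | tmul h h' =>
      change mk₂ S h h' - mk₂ S (h * h') 1 ∈ _
      simpa using mk₂_mul_sub_mem_range_delta (hgen ▸ Algebra.mem_top) h 1
    | add t t' ht ht' =>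
      convert add_mem ht ht' using 1
      simp only [Submodule.Quotient.mk_add, map_add, LinearMap.add_apply]
      abel
  intro y hy
  simpa [mem_ker.mp hy] using hrange y

lemma range_delta_eq_ker_mulMap (hgen : Algebra.adjoin R ((S : Set Λ) ∪ B) = ⊤) :
    range (delta S B) = ker (mulMap S) :=
  le_antisymm (range_le_ker_iff.mpr mulMap_comp_delta) (ker_mulMap_le_range_delta hgen)

open MulOpposite in
theorem delta_injective_of_derivation (D : Λ →ₗ[R] Tensor₃ S B)
    (hD : ∀ x y, D (x * y) = x • D y + op y • D x) (hS : ∀ s ∈ S, D s = 0)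
    (hB : ∀ b : B, D b = mk₃ S B 1 b 1) : Function.Injective (delta S B) := by
  let retraction : Tensor₂ S →ₗ[R] Tensor₃ S B :=
    (balancing₂ S).liftQ (lift <| LinearMap.mk₂ R (fun x y => op y • D x)
      (fun _ _ _ => by simp) (fun c x y => by rw [map_smul]; exact smul_comm (op y) c (D x))
      (fun _ _ _ => by simp [add_smul]) (fun _ _ _ => by simp [op_smul, smul_assoc])) <|
      Submodule.span_le.mpr <| by
        rintro _ ⟨h, h', s, hs, rfl⟩
        simp [hD, hS s hs, mul_smul]
  refine Function.LeftInverse.injective (g := retraction) fun x => ?_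
  refine LinearMap.congr_fun (f := retraction ∘ₗ delta S B) (g := LinearMap.id)
    (Tensor₃.linearMap_ext fun h b h' => ?_) x
  rw [LinearMap.comp_apply, delta_mk₃, map_sub]
  change op h' • D (h * b) - op (b * h') • D h = mk₃ S B h b h'
  simp [hD, hB, mul_smul]

end BalancedTensor

open BalancedTensor TrivSqZeroExt

lemma eV_mul_self (i : Fin n) : eV K A Ω i * eV K A Ω i = eV K A Ω i := by
  simpa [eV] using RingQuot.mkAlgHom_rel K (HRel.idem (K := K) (A := A) (Ω := Ω) i i)

lemma eV_mul_eA_mul_eV (i j : Fin n) (k : ℕ) :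
    eV K A Ω i * eA K A Ω i j k * eV K A Ω j = eA K A Ω i j k := by
  simpa [eV, eA] using RingQuot.mkAlgHom_rel K (HRel.arr_comp (A := A) (Ω := Ω) i j k)

lemma eV_mul_eA (i j : Fin n) (k : ℕ) : eV K A Ω i * eA K A Ω i j k = eA K A Ω i j k := by
  conv_lhs => rw [← eV_mul_eA_mul_eV, ← mul_assoc, ← mul_assoc, eV_mul_self, eV_mul_eA_mul_eV]

lemma eA_mul_eV (i j : Fin n) (k : ℕ) : eA K A Ω i j k * eV K A Ω j = eA K A Ω i j k := by
  conv_lhs => rw [← eV_mul_eA_mul_eV, mul_assoc, eV_mul_self, eV_mul_eA_mul_eV]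

lemma eA_eq_zero {i j : Fin n} {k : ℕ} (h : ¬((i, j) ∈ Ω ∧ k < gij A i j)) :
    eA K A Ω i j k = 0 := by
  simpa [eA] using RingQuot.mkAlgHom_rel K (HRel.arr_invalid (A := A) (Ω := Ω) i j k h)

lemma eL_pow_mul_eA {i j : Fin n} {k : ℕ} (h : (i, j) ∈ Ω) (hk : k < gij A i j) :
    eL K A Ω i ^ expo A i j * eA K A Ω i j k = eA K A Ω i j k * eL K A Ω j ^ expo A j i := by
  simpa [eL, eA] using RingQuot.mkAlgHom_rel K (HRel.comm (A := A) (Ω := Ω) i j k h hk)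

lemma eV_mem_Ssub (i : Fin n) : eV K A Ω i ∈ Ssub K A Ω :=
  Algebra.subset_adjoin (Or.inl ⟨i, rfl⟩)

lemma eL_mem_Ssub (i : Fin n) : eL K A Ω i ∈ Ssub K A Ω :=
  Algebra.subset_adjoin (Or.inr ⟨i, rfl⟩)

section
variable {i j : Fin n} {k : ℕ}

lemma eL_pow_mul_eA_mul_eL_pow_mem_Bsub (h : (i, j) ∈ Ω) (hk : k < gij A i j) (a b : ℕ) :
    eL K A Ω i ^ a * eA K A Ω i j k * eL K A Ω j ^ b ∈ Bsub K A Ω :=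
  Submodule.subset_span ⟨i, j, k, a, b, h, hk, rfl⟩

lemma eL_pow_mul_eA_mem_Bsub (h : (i, j) ∈ Ω) (hk : k < gij A i j) (a : ℕ) :
    eL K A Ω i ^ a * eA K A Ω i j k ∈ Bsub K A Ω := by
  simpa using eL_pow_mul_eA_mul_eL_pow_mem_Bsub K A Ω h hk a 0

lemma eA_mul_eL_pow_mem_Bsub (h : (i, j) ∈ Ω) (hk : k < gij A i j) (b : ℕ) :
    eA K A Ω i j k * eL K A Ω j ^ b ∈ Bsub K A Ω := by
  simpa using eL_pow_mul_eA_mul_eL_pow_mem_Bsub K A Ω h hk 0 b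

lemma eA_mem_Bsub (h : (i, j) ∈ Ω) (hk : k < gij A i j) : eA K A Ω i j k ∈ Bsub K A Ω := by
  simpa using eL_pow_mul_eA_mul_eL_pow_mem_Bsub K A Ω h hk 0 0

end

abbrev SqZeroExt : Type := TrivSqZeroExt (HAlg K A Ω) (Tensor₃ (Ssub K A Ω) (Bsub K A Ω))

def arrowTensor (i j : Fin n) (k : ℕ) : Tensor₃ (Ssub K A Ω) (Bsub K A Ω) :=
  if h : (i, j) ∈ Ω ∧ k < gij A i j then mk₃ _ _ 1 ⟨eA K A Ω i j k, eA_mem_Bsub K A Ω h.1 h.2⟩ 1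
  else 0

def genVal : Gen n → SqZeroExt K A Ω
  | .vtx i => inl (eV K A Ω i)
  | .lp i => inl (eL K A Ω i)
  | .arr i j k => inl (eA K A Ω i j k) + inr (arrowTensor K A Ω i j k)

def freeToSqZeroExt : FA K n →ₐ[K] SqZeroExt K A Ω := FreeAlgebra.lift K (genVal K A Ω)

@[simp] lemma freeToSqZeroExt_gen (g : Gen n) : freeToSqZeroExt K A Ω (gen K g) = genVal K A Ω g :=
  FreeAlgebra.lift_ι_apply _ _

lemma fstHom_comp_freeToSqZeroExt :
    (fstHom K _ _).comp (freeToSqZeroExt K A Ω) = RingQuot.mkAlgHom K (HRel K A Ω) :=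
  FreeAlgebra.hom_ext <| funext fun g =>
    show (freeToSqZeroExt K A Ω (gen K g)).fst = _ by cases g <;> simp [genVal] <;> rfl

lemma freeToSqZeroExt_rel ⦃x y : FA K n⦄ (hxy : HRel K A Ω x y) :
    freeToSqZeroExt K A Ω x = freeToSqZeroExt K A Ω y := by
  refine TrivSqZeroExt.ext ?_ ?_
  · simpa using congr($(fstHom_comp_freeToSqZeroExt K A Ω) x).trans <|
      (RingQuot.mkAlgHom_rel K hxy).trans congr($(fstHom_comp_freeToSqZeroExt K A Ω) y).symm
  · cases hxy with
    | idem i j => split_ifs <;> simp [genVal]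
    | sum_one => simp [genVal, snd_sum]
    | lp_comp i => simp [genVal]
    | arr_comp i j k =>
      simp only [map_mul, freeToSqZeroExt_gen, genVal, snd_mul, fst_mul, fst_add, fst_inl, fst_inr,
        snd_add, snd_inl, snd_inr, smul_zero, add_zero, zero_add, arrowTensor]
      split_ifs with hv
      · set α : Bsub K A Ω := ⟨eA K A Ω i j k, eA_mem_Bsub K A Ω hv.1 hv.2⟩
        rw [smul_mk₃, op_smul_mk₃, mul_one, one_mul,
          mk₃_eq_mk₃_one_left (eV_mem_Ssub K A Ω i) (b := α) (b' := α) (eV_mul_eA K A Ω i j k).symm,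
          mk₃_eq_mk₃_one_right (eV_mem_Ssub K A Ω j) (b := α) (b' := α)
            (eA_mul_eV K A Ω i j k).symm]
      · simp
    | arr_invalid i j k h => simp [genVal, arrowTensor, h]
    | lp_nil i => simp [genVal]
    | comm i j k h hk =>
      set α : Bsub K A Ω := ⟨eA K A Ω i j k, eA_mem_Bsub K A Ω h hk⟩
      set α' : Bsub K A Ω := ⟨_, eA_mul_eL_pow_mem_Bsub K A Ω h hk (expo A j i)⟩
      simp only [map_mul, map_pow, freeToSqZeroExt_gen, genVal, inl_pow, snd_mul, fst_add, fst_inl,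
        fst_inr, snd_add, snd_inl, snd_inr, smul_zero, add_zero, zero_add, arrowTensor,
        dif_pos (And.intro h hk)]
      rw [smul_mk₃, op_smul_mk₃, mul_one, one_mul,
        mk₃_eq_mk₃_one_left (pow_mem (eL_mem_Ssub K A Ω i) _) (b := α) (b' := α')
          (eL_pow_mul_eA K A Ω h hk).symm,
        mk₃_eq_mk₃_one_right (pow_mem (eL_mem_Ssub K A Ω j) _) (b := α) (b' := α') rfl]

def toSqZeroExt : HAlg K A Ω →ₐ[K] SqZeroExt K A Ω :=
  RingQuot.liftAlgHom K ⟨freeToSqZeroExt K A Ω, freeToSqZeroExt_rel K A Ω⟩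

@[simp] lemma toSqZeroExt_gen (g : Gen n) :
    toSqZeroExt K A Ω (RingQuot.mkAlgHom K (HRel K A Ω) (gen K g)) = genVal K A Ω g := by
  simp [toSqZeroExt]

lemma fst_toSqZeroExt (x : HAlg K A Ω) : (toSqZeroExt K A Ω x).fst = x := by
  suffices (fstHom K _ _).comp (toSqZeroExt K A Ω) = AlgHom.id K _ from congr($this x)
  refine RingQuot.ringQuot_ext' _ _ _ (AlgHom.ext fun x => ?_)
  simpa [toSqZeroExt] using congr($(fstHom_comp_freeToSqZeroExt K A Ω) x)

lemma toSqZeroExt_of_mem_Ssub {s : HAlg K A Ω} (hs : s ∈ Ssub K A Ω) :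
    toSqZeroExt K A Ω s = inl s := by
  suffices Ssub K A Ω ≤ AlgHom.equalizer (toSqZeroExt K A Ω) (inlAlgHom K _ _) from this hs
  refine Algebra.adjoin_le ?_
  rintro _ (⟨i, rfl⟩ | ⟨i, rfl⟩) <;> exact toSqZeroExt_gen K A Ω _

def arrowDerivation : HAlg K A Ω →ₗ[K] Tensor₃ (Ssub K A Ω) (Bsub K A Ω) where
  toFun x := (toSqZeroExt K A Ω x).snd
  map_add' x y := by simp
  map_smul' c x := by simp

lemma arrowDerivation_mul (x y : HAlg K A Ω) :
    arrowDerivation K A Ω (x * y) =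
      x • arrowDerivation K A Ω y + MulOpposite.op y • arrowDerivation K A Ω x := by
  simp [arrowDerivation, fst_toSqZeroExt]

lemma arrowDerivation_of_mem_Ssub {s : HAlg K A Ω} (hs : s ∈ Ssub K A Ω) :
    arrowDerivation K A Ω s = 0 := by
  simp [arrowDerivation, toSqZeroExt_of_mem_Ssub K A Ω hs]

lemma arrowDerivation_of_mem_Bsub (b : Bsub K A Ω) :
    arrowDerivation K A Ω b = mk₃ _ _ 1 b 1 := by
  obtain ⟨b, hb⟩ := b
  induction hb using Submodule.span_induction with
  | mem x hx =>
    obtain ⟨i, j, k, a, c, h, hk, rfl⟩ := hx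
    have hα : toSqZeroExt K A Ω (eA K A Ω i j k) =
        inl (eA K A Ω i j k) + inr (mk₃ _ _ 1 ⟨eA K A Ω i j k, eA_mem_Bsub K A Ω h hk⟩ 1) :=
      (toSqZeroExt_gen K A Ω (.arr i j k)).trans (by simp [genVal, arrowTensor, h, hk])
    simp only [arrowDerivation, LinearMap.coe_mk, AddHom.coe_mk, map_mul, map_pow, hα,
      toSqZeroExt_of_mem_Ssub K A Ω (eL_mem_Ssub K A Ω _), inl_pow, snd_mul, fst_mul, fst_add,
      fst_inl, fst_inr, snd_add, snd_inl, snd_inr, smul_zero, add_zero, zero_add, smul_mk₃,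
      op_smul_mk₃, mul_one, one_mul]
    rw [mk₃_eq_mk₃_one_left (pow_mem (eL_mem_Ssub K A Ω i) _)
        (b' := ⟨_, eL_pow_mul_eA_mem_Bsub K A Ω h hk a⟩) rfl,
      mk₃_eq_mk₃_one_right (pow_mem (eL_mem_Ssub K A Ω j) _)
        (b := ⟨_, eL_pow_mul_eA_mem_Bsub K A Ω h hk a⟩)
        (b' := ⟨_, eL_pow_mul_eA_mul_eL_pow_mem_Bsub K A Ω h hk a c⟩) rfl]
  | zero =>
    show arrowDerivation K A Ω 0 = mk₃ (Ssub K A Ω) (Bsub K A Ω) 1 0 1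
    simp
  | add x y hx hy hx' hy' =>
    show arrowDerivation K A Ω (x + y) = mk₃ (Ssub K A Ω) (Bsub K A Ω) 1 (⟨x, hx⟩ + ⟨y, hy⟩) 1
    rw [map_add, map_add, LinearMap.add_apply, ← hx', ← hy']
  | smul c x hx hx' =>
    show arrowDerivation K A Ω (c • x) = mk₃ (Ssub K A Ω) (Bsub K A Ω) 1 (c • ⟨x, hx⟩) 1
    rw [map_smul, map_smul, LinearMap.smul_apply, ← hx']

lemma adjoin_Ssub_union_Bsub :
    Algebra.adjoin K ((Ssub K A Ω : Set (HAlg K A Ω)) ∪ Bsub K A Ω) = ⊤ := by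
  have hgen (g : Gen n) : RingQuot.mkAlgHom K (HRel K A Ω) (gen K g) ∈
      Algebra.adjoin K ((Ssub K A Ω : Set (HAlg K A Ω)) ∪ Bsub K A Ω) := by
    refine Algebra.subset_adjoin ?_
    cases g with
    | vtx i => exact Or.inl (eV_mem_Ssub K A Ω i)
    | lp i => exact Or.inl (eL_mem_Ssub K A Ω i)
    | arr i j k =>
      by_cases h : (i, j) ∈ Ω ∧ k < gij A i j
      · exact Or.inr (eA_mem_Bsub K A Ω h.1 h.2)
      · exact Or.inr (show eA K A Ω i j k ∈ Bsub K A Ω by rw [eA_eq_zero K A Ω h]; exact zero_mem _)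
  rw [eq_top_iff,
    ← (RingQuot.mkAlgHom K (HRel K A Ω)).range_eq_top.mpr (RingQuot.mkAlgHom_surjective K _),
    ← Algebra.map_top, ← FreeAlgebra.adjoin_range_ι, AlgHom.map_adjoin, Algebra.adjoin_le_iff]
  rintro _ ⟨_, ⟨g, rfl⟩, rfl⟩
  exact hgen g

theorem statement_2 :
    ∃ (δ : THBH K A Ω →ₗ[K] THH K A Ω) (μ : THH K A Ω →ₗ[K] HAlg K A Ω)
      (lact₂ ract₂ : HAlg K A Ω → (THBH K A Ω →ₗ[K] THBH K A Ω))
      (lact₁ ract₁ : HAlg K A Ω → (THH K A Ω →ₗ[K] THH K A Ω)),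
      -- the formulas for δ and the multiplication map μ
      (∀ (h h' : HAlg K A Ω) (b : ↥(Bsub K A Ω)),
        δ (mk2 K A Ω h b h') = mk1 K A Ω (h * (b : HAlg K A Ω)) h' -
          mk1 K A Ω h ((b : HAlg K A Ω) * h')) ∧
      (∀ h h' : HAlg K A Ω, μ (mk1 K A Ω h h') = h * h') ∧
      -- the `H`-`H`-bimodule structures, given on pure tensors
      (∀ (a h h' : HAlg K A Ω) (b : ↥(Bsub K A Ω)),
        lact₂ a (mk2 K A Ω h b h') = mk2 K A Ω (a * h) b h' ∧
        ract₂ a (mk2 K A Ω h b h') = mk2 K A Ω h b (h' * a)) ∧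
      (∀ a h h' : HAlg K A Ω,
        lact₁ a (mk1 K A Ω h h') = mk1 K A Ω (a * h) h' ∧
        ract₁ a (mk1 K A Ω h h') = mk1 K A Ω h (h' * a)) ∧
      -- δ and μ are morphisms of `H`-`H`-bimodules
      (∀ (a : HAlg K A Ω) (x : THBH K A Ω),
        δ (lact₂ a x) = lact₁ a (δ x) ∧ δ (ract₂ a x) = ract₁ a (δ x)) ∧
      (∀ (a : HAlg K A Ω) (y : THH K A Ω),
        μ (lact₁ a y) = a * μ y ∧ μ (ract₁ a y) = μ y * a) ∧
      -- exactness: `0 → H⊗_S B⊗_S H → H⊗_S H → H → 0`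
      Function.Injective δ ∧ Function.Surjective μ ∧
      LinearMap.range δ = LinearMap.ker μ := by
  refine ⟨delta _ _, mulMap _, lmul₃ _ _, fun a => rmul₃ _ _ (.op a), lmul₂ _, rmul₂ _,
    delta_mk₃, mulMap_mk₂, fun a h h' b => ⟨lmul₃_mk₃ a h h' b, rmul₃_mk₃ a h h' b⟩,
    fun a h h' => ⟨lmul₂_mk₂ a h h', rmul₂_mk₂ a h h'⟩,
    fun a x => ⟨delta_smul a x, delta_op_smul a x⟩,
    fun a y => ⟨mulMap_lmul₂ a y, mulMap_rmul₂ a y⟩, ?_, mulMap_surjective,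
    range_delta_eq_ker_mulMap (adjoin_Ssub_union_Bsub K A Ω)⟩
  exact delta_injective_of_derivation (arrowDerivation K A Ω) (arrowDerivation_mul K A Ω)
    (fun _ => arrowDerivation_of_mem_Ssub K A Ω) (arrowDerivation_of_mem_Bsub K A Ω)

end

end GLS
end
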